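/- arXiv:2210.05994 — 2 statements merged into one kernel-verified Lean document; each statement's English description precedes it below -/
import Mathlib

section
/- Let n ≥ 1 and let F_1, …, F_n : ℝ^d → ℝ^d be operators with average F = (1/n)∑_{i=1}^n F_i. Suppose each F_i is ℓ-cocoercive and F is μ-strongly monotone. Take the stepsize γ = 2/(9ℓ) and any natural number K with K ≥ 10ℓ/μ. Then the SARAH inner-loop trajectory satisfies 𝔼[‖F(z^K)‖²] ≤ (1/2) · ‖F(z⁰)‖². -/
open Finset

noncomputable section

/-- An operator `G : ℝ^d → ℝ^d` is `ℓ`-cocoercive: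
`‖G(u) - G(v)‖² ≤ ℓ ⟨G(u) - G(v), u - v⟩` for all `u, v`. -/
def Cocoercive {d : ℕ} (ℓ : ℝ)
    (G : EuclideanSpace ℝ (Fin d) → EuclideanSpace ℝ (Fin d)) : Prop :=
  ∀ u v : EuclideanSpace ℝ (Fin d),
    ‖G u - G v‖ ^ 2 ≤ ℓ * (inner ℝ (G u - G v) (u - v) : ℝ)

/-- An operator `G : ℝ^d → ℝ^d` is `μ`-strongly monotone:
`⟨G(u) - G(v), u - v⟩ ≥ μ ‖u - v‖²` for all `u, v`. -/
def StronglyMonotone {d : ℕ} (μ : ℝ)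
    (G : EuclideanSpace ℝ (Fin d) → EuclideanSpace ℝ (Fin d)) : Prop :=
  ∀ u v : EuclideanSpace ℝ (Fin d),
    μ * ‖u - v‖ ^ 2 ≤ (inner ℝ (G u - G v) (u - v) : ℝ)

/-- The average operator `F = (1/n) ∑_{i=1}^n F_i`. -/
def opAvg {d n : ℕ} (F : Fin n → EuclideanSpace ℝ (Fin d) → EuclideanSpace ℝ (Fin d)) :
    EuclideanSpace ℝ (Fin d) → EuclideanSpace ℝ (Fin d) :=
  fun z => (n : ℝ)⁻¹ • ∑ i, F i z

/-- One step of the SARAH recursion: from `(z, v)` and index `i`, go to `(z', v')`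
with `z' = z - γ v` and `v' = F_i(z') - F_i(z) + v`. -/
def sarahStep {d n : ℕ} (γ : ℝ)
    (F : Fin n → EuclideanSpace ℝ (Fin d) → EuclideanSpace ℝ (Fin d)) (i : Fin n)
    (p : EuclideanSpace ℝ (Fin d) × EuclideanSpace ℝ (Fin d)) :
    EuclideanSpace ℝ (Fin d) × EuclideanSpace ℝ (Fin d) :=
  (p.1 - γ • p.2, F i (p.1 - γ • p.2) - F i p.1 + p.2)

/-- Run SARAH steps along a list of indices. -/
def sarahRun {d n : ℕ} (γ : ℝ)
    (F : Fin n → EuclideanSpace ℝ (Fin d) → EuclideanSpace ℝ (Fin d)) :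
    EuclideanSpace ℝ (Fin d) × EuclideanSpace ℝ (Fin d) → List (Fin n) →
      EuclideanSpace ℝ (Fin d) × EuclideanSpace ℝ (Fin d)
  | p, [] => p
  | p, i :: l => sarahRun γ F (sarahStep γ F i p) l

/-- The SARAH inner-loop trajectory `(z^k, v^k)` started at `z^0 = z0` with
`v^0 = F(z^0)`, for the index sequence `j : Fin K → Fin n` (so `i_k = j (k-1)`):
`sarahTraj γ F z0 j k = (z^k, v^k)` is obtained by performing the SARAH steps
with the first `k` indices `i_1, …, i_k`. -/
def sarahTraj {d n K : ℕ} (γ : ℝ)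
    (F : Fin n → EuclideanSpace ℝ (Fin d) → EuclideanSpace ℝ (Fin d))
    (z0 : EuclideanSpace ℝ (Fin d)) (j : Fin K → Fin n) (k : ℕ) :
    EuclideanSpace ℝ (Fin d) × EuclideanSpace ℝ (Fin d) :=
  sarahRun γ F (z0, opAvg F z0) ((List.ofFn j).take k)

/-!
Write `v` for the SARAH estimator and `F` for the average operator, and put `γℓ = 2/9`.
Cocoercivity of the `F_i` bounds the summed squared increments `‖F_i(z - γv) - F_i(z)‖²` by
`-γℓ n ⟨F(z - γv) - F(z), v⟩`, and strong monotonicity of `F` makes this inner product at most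
`-μγ‖v‖²`. Hence one step shrinks the conditional mean of `‖v‖²` by the factor
`1 - (16/9)μγ ≤ exp(-32μ/(81ℓ))`, so after `K ≥ 10ℓ/μ` steps `𝔼‖v^K‖² ≤ ‖F(z⁰)‖²/8`.
The same increment bound shows that the mean of `8‖F(z) - v‖² + ‖v‖²` never increases; its
initial value is `‖F(z⁰)‖²`. Finally `‖F(z^K)‖² ≤ 2‖v^K‖² + 2‖F(z^K) - v^K‖²` gives
`𝔼‖F(z^K)‖² ≤ (15/32)‖F(z⁰)‖²`.
-/

section IndexSequences

variable {α ι : Type*} [Fintype ι]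

theorem sum_foldl_ofFn_le_pow_mul (f : α → ι → α) (g : α → ℝ) {c : ℝ} (hc : 0 ≤ c)
    (hf : ∀ a, ∑ i, g (f a i) ≤ c * g a) (K : ℕ) (a : α) :
    ∑ j : Fin K → ι, g ((List.ofFn j).foldl f a) ≤ c ^ K * g a := by
  induction K generalizing a with
  | zero => simp
  | succ K ih =>
    rw [← (Fin.consEquiv fun _ => ι).sum_comp, Fintype.sum_prod_type]
    calc ∑ i, ∑ j : Fin K → ι, g ((List.ofFn (Fin.cons i j : Fin (K + 1) → ι)).foldl f a)
        = ∑ i, ∑ j : Fin K → ι, g ((List.ofFn j).foldl f (f a i)) := by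
          simp [List.ofFn_succ]
      _ ≤ ∑ i, c ^ K * g (f a i) := sum_le_sum fun i _ => ih (f a i)
      _ ≤ c ^ (K + 1) * g a := by
          rw [← mul_sum, pow_succ, mul_assoc]
          exact mul_le_mul_of_nonneg_left (hf a) (pow_nonneg hc K)

end IndexSequences

section InnerProductSpace

variable {E : Type*} [NormedAddCommGroup E] [InnerProductSpace ℝ E]

theorem norm_sq_le_two_mul_add (a b : E) : ‖a‖ ^ 2 ≤ 2 * ‖b‖ ^ 2 + 2 * ‖a - b‖ ^ 2 := by
  have h := parallelogram_law_with_norm ℝ b (a - b)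
  rw [add_sub_cancel] at h
  nlinarith [sq_nonneg ‖b - (a - b)‖]

theorem sum_norm_sq_add_sub_le {ι : Type*} [Fintype ι] (a m : E) (w : ι → E)
    (hm : (Fintype.card ι : ℝ) • m = ∑ i, w i) :
    ∑ i, ‖a + (m - w i)‖ ^ 2 ≤ Fintype.card ι * ‖a‖ ^ 2 + ∑ i, ‖w i‖ ^ 2 := by
  have hsum : ∑ i, (m - w i) = 0 := by
    rw [sum_sub_distrib, ← hm, sum_const, card_univ, Nat.cast_smul_eq_nsmul, sub_self]
  have hcross : ∑ i, inner ℝ m (w i) = Fintype.card ι * ‖m‖ ^ 2 := by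
    rw [← inner_sum, ← hm, real_inner_smul_right, real_inner_self_eq_norm_sq]
  simp only [norm_add_sq_real, norm_sub_sq_real, sum_add_distrib, sum_sub_distrib,
    ← mul_sum, ← inner_sum, hsum, hcross, inner_zero_right, sum_const, card_univ,
    nsmul_eq_mul]
  nlinarith [sq_nonneg ‖m‖, (Nat.cast_nonneg (Fintype.card ι) : (0 : ℝ) ≤ _)]

theorem sum_norm_sq_le_of_lyapunov {ι : Type*} (s : Finset ι) (a b : ι → E) {C : ℝ}
    (hb : ∑ j ∈ s, ‖b j‖ ^ 2 ≤ C / 8)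
    (hab : ∑ j ∈ s, (8 * ‖a j - b j‖ ^ 2 + ‖b j‖ ^ 2) ≤ C) :
    ∑ j ∈ s, ‖a j‖ ^ 2 ≤ C / 2 := by
  have hsplit : ∑ j ∈ s, ‖a j‖ ^ 2 ≤ ∑ j ∈ s, (2 * ‖b j‖ ^ 2 + 2 * ‖a j - b j‖ ^ 2) :=
    sum_le_sum fun j _ => norm_sq_le_two_mul_add _ _
  rw [sum_add_distrib, ← mul_sum, ← mul_sum] at hsplit
  rw [sum_add_distrib, ← mul_sum] at hab
  have hC : 0 ≤ C := le_trans (by positivity) hab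
  linarith

end InnerProductSpace

theorem Real.exp_neg_le_one_div_eight {x : ℝ} (hx : 3 ≤ x) : Real.exp (-x) ≤ 1 / 8 := by
  have h := Real.quadratic_le_exp_of_nonneg (by linarith : (0 : ℝ) ≤ x)
  rw [Real.exp_neg, one_div]
  exact inv_anti₀ (by norm_num) (by nlinarith)

section Sarah

variable {d n : ℕ} {F : Fin n → EuclideanSpace ℝ (Fin d) → EuclideanSpace ℝ (Fin d)}
  {γ ℓ μ : ℝ}

theorem natCast_smul_opAvg (z : EuclideanSpace ℝ (Fin d)) :
    (n : ℝ) • opAvg F z = ∑ i, F i z := by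
  rcases n.eq_zero_or_pos with rfl | hn
  · simp
  · exact smul_inv_smul₀ (by positivity) _

theorem sarahRun_eq_foldl (p : EuclideanSpace ℝ (Fin d) × EuclideanSpace ℝ (Fin d))
    (l : List (Fin n)) : sarahRun γ F p l = l.foldl (fun p i => sarahStep γ F i p) p := by
  induction l generalizing p with
  | nil => rfl
  | cons i l ih => exact ih _

theorem sarahTraj_eq_foldl {K : ℕ} (z0 : EuclideanSpace ℝ (Fin d)) (j : Fin K → Fin n) :
    sarahTraj γ F z0 j K
      = (List.ofFn j).foldl (fun p i => sarahStep γ F i p) (z0, opAvg F z0) := by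
  rw [sarahTraj, List.take_of_length_le List.length_ofFn.le, sarahRun_eq_foldl]

def sarahIncrement (γ : ℝ) (F : Fin n → EuclideanSpace ℝ (Fin d) → EuclideanSpace ℝ (Fin d))
    (p : EuclideanSpace ℝ (Fin d) × EuclideanSpace ℝ (Fin d)) (i : Fin n) :
    EuclideanSpace ℝ (Fin d) :=
  F i (p.1 - γ • p.2) - F i p.1

/-- The weight `8 = 2/(γℓ) - 1` at `γℓ = 2/9` is what lets the cocoercivity gain in `‖v‖²`
pay for the variance of the increments in `‖F(z) - v‖²`. -/
def sarahLyapunov (F : Fin n → EuclideanSpace ℝ (Fin d) → EuclideanSpace ℝ (Fin d))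
    (p : EuclideanSpace ℝ (Fin d) × EuclideanSpace ℝ (Fin d)) : ℝ :=
  8 * ‖opAvg F p.1 - p.2‖ ^ 2 + ‖p.2‖ ^ 2

theorem sarahStep_fst (i : Fin n) (p : EuclideanSpace ℝ (Fin d) × EuclideanSpace ℝ (Fin d)) :
    (sarahStep γ F i p).1 = p.1 - γ • p.2 := rfl

theorem sarahStep_snd (i : Fin n) (p : EuclideanSpace ℝ (Fin d) × EuclideanSpace ℝ (Fin d)) :
    (sarahStep γ F i p).2 = sarahIncrement γ F p i + p.2 := rfl

theorem natCast_smul_opAvg_sub (p : EuclideanSpace ℝ (Fin d) × EuclideanSpace ℝ (Fin d)) :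
    (n : ℝ) • (opAvg F (p.1 - γ • p.2) - opAvg F p.1) = ∑ i, sarahIncrement γ F p i := by
  rw [smul_sub, natCast_smul_opAvg, natCast_smul_opAvg, ← sum_sub_distrib]
  rfl

theorem sum_norm_sq_sarahIncrement_le (hco : ∀ i, Cocoercive ℓ (F i))
    (p : EuclideanSpace ℝ (Fin d) × EuclideanSpace ℝ (Fin d)) :
    ∑ i, ‖sarahIncrement γ F p i‖ ^ 2
      ≤ -(γ * ℓ * inner ℝ (∑ i, sarahIncrement γ F p i) p.2) := by
  have hstep : p.1 - γ • p.2 - p.1 = -(γ • p.2) := by abel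
  calc ∑ i, ‖sarahIncrement γ F p i‖ ^ 2
      ≤ ∑ i, ℓ * inner ℝ (sarahIncrement γ F p i) (p.1 - γ • p.2 - p.1) :=
        sum_le_sum fun i _ => hco i _ _
    _ = -(γ * ℓ * inner ℝ (∑ i, sarahIncrement γ F p i) p.2) := by
        rw [← mul_sum, ← sum_inner, hstep, inner_neg_right, real_inner_smul_right]
        ring

theorem inner_sum_sarahIncrement_le (hsm : StronglyMonotone μ (opAvg F)) (hγ : 0 < γ)
    (p : EuclideanSpace ℝ (Fin d) × EuclideanSpace ℝ (Fin d)) :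
    inner ℝ (∑ i, sarahIncrement γ F p i) p.2 ≤ -(n * μ * γ * ‖p.2‖ ^ 2) := by
  have h := hsm (p.1 - γ • p.2) p.1
  rw [show p.1 - γ • p.2 - p.1 = -(γ • p.2) by abel, inner_neg_right, norm_neg, norm_smul,
    real_inner_smul_right, Real.norm_of_nonneg hγ.le] at h
  have hmean : μ * γ * ‖p.2‖ ^ 2 ≤ -inner ℝ (opAvg F (p.1 - γ • p.2) - opAvg F p.1) p.2 := by
    nlinarith
  rw [← natCast_smul_opAvg_sub, real_inner_smul_left]
  nlinarith [(Nat.cast_nonneg n : (0 : ℝ) ≤ n)]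

theorem sum_norm_sq_sarahStep_snd (p : EuclideanSpace ℝ (Fin d) × EuclideanSpace ℝ (Fin d)) :
    ∑ i, ‖(sarahStep γ F i p).2‖ ^ 2 = ∑ i, ‖sarahIncrement γ F p i‖ ^ 2
      + 2 * inner ℝ (∑ i, sarahIncrement γ F p i) p.2 + n * ‖p.2‖ ^ 2 := by
  simp only [sarahStep_snd, norm_add_sq_real, sum_add_distrib, ← mul_sum, ← sum_inner,
    sum_const, card_univ, Fintype.card_fin, nsmul_eq_mul]

theorem sum_norm_sq_sarahStep_snd_le (hco : ∀ i, Cocoercive ℓ (F i))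
    (hsm : StronglyMonotone μ (opAvg F)) (hγ : 0 < γ) (hγℓ : γ * ℓ ≤ 2)
    (p : EuclideanSpace ℝ (Fin d) × EuclideanSpace ℝ (Fin d)) :
    ∑ i, ‖(sarahStep γ F i p).2‖ ^ 2 ≤ n * (1 - (2 - γ * ℓ) * μ * γ) * ‖p.2‖ ^ 2 := by
  have hS := sum_norm_sq_sarahIncrement_le (γ := γ) hco p
  have hT := inner_sum_sarahIncrement_le hsm hγ p
  rw [sum_norm_sq_sarahStep_snd]
  nlinarith [mul_le_mul_of_nonneg_left hT (sub_nonneg.2 hγℓ)]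

theorem sum_norm_sq_sarahStep_snd_le_exp (hco : ∀ i, Cocoercive ℓ (F i))
    (hsm : StronglyMonotone μ (opAvg F)) (hγ : 0 < γ) (hγℓ : γ * ℓ ≤ 2)
    (p : EuclideanSpace ℝ (Fin d) × EuclideanSpace ℝ (Fin d)) :
    ∑ i, ‖(sarahStep γ F i p).2‖ ^ 2
      ≤ n * Real.exp (-((2 - γ * ℓ) * μ * γ)) * ‖p.2‖ ^ 2 := by
  refine (sum_norm_sq_sarahStep_snd_le hco hsm hγ hγℓ p).trans ?_
  gcongr
  linarith [Real.add_one_le_exp (-((2 - γ * ℓ) * μ * γ))]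

theorem sum_sarahLyapunov_sarahStep_le (hco : ∀ i, Cocoercive ℓ (F i)) (hγℓ : γ * ℓ = 2 / 9)
    (p : EuclideanSpace ℝ (Fin d) × EuclideanSpace ℝ (Fin d)) :
    ∑ i, sarahLyapunov F (sarahStep γ F i p) ≤ n * sarahLyapunov F p := by
  have hdiff : ∀ i, opAvg F (sarahStep γ F i p).1 - (sarahStep γ F i p).2
      = (opAvg F p.1 - p.2)
        + ((opAvg F (p.1 - γ • p.2) - opAvg F p.1) - sarahIncrement γ F p i) := by
    intro i
    rw [sarahStep_fst, sarahStep_snd]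
    abel
  have hvar := sum_norm_sq_add_sub_le (opAvg F p.1 - p.2)
    (opAvg F (p.1 - γ • p.2) - opAvg F p.1) (sarahIncrement γ F p)
    (by rw [Fintype.card_fin]; exact natCast_smul_opAvg_sub p)
  have hS := sum_norm_sq_sarahIncrement_le (γ := γ) hco p
  rw [Fintype.card_fin] at hvar
  rw [hγℓ] at hS
  simp only [sarahLyapunov, hdiff, sum_add_distrib, ← mul_sum, sum_norm_sq_sarahStep_snd]
  nlinarith [sum_nonneg fun i (_ : i ∈ univ) => sq_nonneg ‖sarahIncrement γ F p i‖]

end Sarah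

theorem sarah_one_epoch_contraction_general {d n : ℕ} (ℓ μ : ℝ) (hℓ : 0 < ℓ)
    (hμ : 0 < μ)
    (F : Fin n → EuclideanSpace ℝ (Fin d) → EuclideanSpace ℝ (Fin d))
    (hco : ∀ i, Cocoercive ℓ (F i)) (hsm : StronglyMonotone μ (opAvg F))
    (K : ℕ) (hKμ : 10 * ℓ / μ ≤ (K : ℝ)) (z0 : EuclideanSpace ℝ (Fin d)) :
    (∑ j : Fin K → Fin n,
        ‖opAvg F (sarahTraj (2 / (9 * ℓ)) F z0 j K).1‖ ^ 2) / (n : ℝ) ^ K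
      ≤ 1 / 2 * ‖opAvg F z0‖ ^ 2 := by
  have hγ : 0 < 2 / (9 * ℓ) := by positivity
  have hγℓ : 2 / (9 * ℓ) * ℓ = 2 / 9 := by field_simp
  have hrate : 3 ≤ K * ((2 - 2 / 9) * μ * (2 / (9 * ℓ))) := by
    have h : 10 * ℓ / μ * ((2 - 2 / 9) * μ * (2 / (9 * ℓ))) = 320 / 81 := by
      field_simp; ring
    nlinarith [mul_le_mul_of_nonneg_right hKμ
      (by positivity : (0 : ℝ) ≤ (2 - 2 / 9) * μ * (2 / (9 * ℓ)))]
  have hv := sum_foldl_ofFn_le_pow_mul (fun p i => sarahStep (2 / (9 * ℓ)) F i p)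
    (fun p => ‖p.2‖ ^ 2) (by positivity)
    (sum_norm_sq_sarahStep_snd_le_exp hco hsm hγ (by linarith)) K (z0, opAvg F z0)
  rw [hγℓ, mul_pow, ← Real.exp_nat_mul, mul_neg] at hv
  have hΦ := sum_foldl_ofFn_le_pow_mul (fun p i => sarahStep (2 / (9 * ℓ)) F i p)
    (sarahLyapunov F) (Nat.cast_nonneg n) (sum_sarahLyapunov_sarahStep_le hco hγℓ) K
    (z0, opAvg F z0)
  simp only [sarahTraj_eq_foldl]
  refine div_le_of_le_mul₀ (by positivity) (by positivity) ?_
  refine (sum_norm_sq_le_of_lyapunov (C := n ^ K * ‖opAvg F z0‖ ^ 2) _ _ _ ?_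
    (by simpa [sarahLyapunov] using hΦ)).trans_eq (by ring)
  calc _ ≤ _ := hv
    _ ≤ n ^ K * (1 / 8) * ‖opAvg F z0‖ ^ 2 := by
        gcongr
        exact Real.exp_neg_le_one_div_eight hrate
    _ = _ := by ring

/-- **Theorem 1.** If each `F_i` is `ℓ`-cocoercive and the average `F` is `μ`-strongly
monotone, then with stepsize `γ = 2/(9ℓ)` and any number of steps `K ≥ 10ℓ/μ`, the
SARAH inner loop satisfies `𝔼[‖F(z^K)‖²] ≤ (1/2) ‖F(z^0)‖²`, where the expectation is
the uniform average over all `n^K` index sequences. -/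
theorem sarah_one_epoch_contraction {d n : ℕ} (hn : 1 ≤ n) (ℓ μ : ℝ) (hℓ : 0 < ℓ)
    (hμ : 0 < μ)
    (F : Fin n → EuclideanSpace ℝ (Fin d) → EuclideanSpace ℝ (Fin d))
    (hco : ∀ i, Cocoercive ℓ (F i)) (hsm : StronglyMonotone μ (opAvg F))
    (K : ℕ) (hKμ : 10 * ℓ / μ ≤ (K : ℝ)) (z0 : EuclideanSpace ℝ (Fin d)) :
    (∑ j : Fin K → Fin n,
        ‖opAvg F (sarahTraj (2 / (9 * ℓ)) F z0 j K).1‖ ^ 2) / (n : ℝ) ^ K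
      ≤ 1 / 2 * ‖opAvg F z0‖ ^ 2 :=
  sarah_one_epoch_contraction_general ℓ μ hℓ hμ F hco hsm K hKμ z0

end
end

section
/- Let n ≥ 1 and let F_1, …, F_n : ℝ^d → ℝ^d be arbitrary operators with average F = (1/n)∑_{i=1}^n F_i. Then for every k ∈ {1, …, K}, the SARAH inner-loop trajectory satisfies the exact identity 𝔼[‖F(z^k) − v^k‖²] = 𝔼[‖F(z^{k−1}) − v^{k−1}‖²] − 𝔼[‖F(z^k) − F(z^{k−1})‖²] + 𝔼[‖v^k − v^{k−1}‖²]. -/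
/-!
Write `e^k = F(z^k) - v^k`. Since `e^k = e^{k-1} + (F(z^k) - F(z^{k-1})) - (v^k - v^{k-1})`,
expanding the square gives the identity pointwise up to the cross term
`2⟪(F(z^k) - F(z^{k-1})) - (v^k - v^{k-1}), F(z^k) - v^{k-1}⟫`. Its second factor depends only on
`i_1, …, i_{k-1}`, while averaging the first factor over `i_k` gives zero, because
`v^k - v^{k-1} = F_{i_k}(z^k) - F_{i_k}(z^{k-1})` averages to `F(z^k) - F(z^{k-1})`. Splitting
the index sequences at position `k` therefore kills the cross term in expectation.
-/

open Finset

noncomputable section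

theorem norm_sub_sq_eq_of_increments {E : Type*} [NormedAddCommGroup E] [InnerProductSpace ℝ E]
    (x x' v v' : E) :
    ‖x' - v'‖ ^ 2 = ‖x - v‖ ^ 2 - ‖x' - x‖ ^ 2 + ‖v' - v‖ ^ 2
      + 2 * inner ℝ ((x' - x) - (v' - v)) (x' - v) := by
  have key : ∀ a b c : E,
      ‖a + b - c‖ ^ 2 = ‖a‖ ^ 2 - ‖b‖ ^ 2 + ‖c‖ ^ 2 + 2 * inner ℝ (b - c) (a + b) := by
    intro a b c
    rw [norm_sub_sq_real, norm_add_sq_real, inner_sub_left, inner_add_right, inner_add_right,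
      inner_add_left, real_inner_self_eq_norm_sq, real_inner_comm a c, real_inner_comm b c,
      real_inner_comm a b]
    ring
  have hsplit : x' - v' = (x - v) + (x' - x) - (v' - v) := by abel
  have hw : x' - v = (x - v) + (x' - x) := by abel
  rw [hsplit, hw]
  exact key _ _ _

theorem sum_sub_opAvg {d n : ℕ}
    (F : Fin n → EuclideanSpace ℝ (Fin d) → EuclideanSpace ℝ (Fin d))
    (x : EuclideanSpace ℝ (Fin d)) : ∑ i, (F i x - opAvg F x) = 0 := by
  rcases Nat.eq_zero_or_pos n with rfl | hn
  · exact sum_empty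
  rw [sum_sub_distrib, sum_const, card_univ, Fintype.card_fin, opAvg,
    ← Nat.cast_smul_eq_nsmul ℝ, smul_smul, mul_inv_cancel₀ (by positivity), one_smul, sub_self]

section Trajectory

variable {d n : ℕ} (γ : ℝ) (F : Fin n → EuclideanSpace ℝ (Fin d) → EuclideanSpace ℝ (Fin d))

theorem sarahRun_append (p : EuclideanSpace ℝ (Fin d) × EuclideanSpace ℝ (Fin d))
    (l₁ l₂ : List (Fin n)) :
    sarahRun γ F p (l₁ ++ l₂) = sarahRun γ F (sarahRun γ F p l₁) l₂ := by
  induction l₁ generalizing p with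
  | nil => rfl
  | cons i l ih => exact ih _

variable {K : ℕ} (z0 : EuclideanSpace ℝ (Fin d))

theorem sarahTraj_succ (j : Fin K → Fin n) {m : ℕ} (hm : m < K) :
    sarahTraj γ F z0 j (m + 1) = sarahStep γ F (j ⟨m, hm⟩) (sarahTraj γ F z0 j m) := by
  have htake : (List.ofFn j).take (m + 1) = (List.ofFn j).take m ++ [j ⟨m, hm⟩] := by
    simp [List.take_add_one, hm]
  rw [sarahTraj, htake, sarahRun_append]
  rfl

theorem sarahTraj_congr {j j' : Fin K → Fin n} {m : ℕ}
    (h : ∀ i : Fin K, i.val < m → j i = j' i) :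
    sarahTraj γ F z0 j m = sarahTraj γ F z0 j' m := by
  unfold sarahTraj
  congr 1
  apply List.ext_getElem (by simp)
  intro i hi _
  simp only [List.getElem_take, List.getElem_ofFn]
  simp only [List.length_take, List.length_ofFn, lt_min_iff] at hi
  exact h _ hi.1

theorem sum_inner_sarahStep_innovation
    (q : EuclideanSpace ℝ (Fin d) × EuclideanSpace ℝ (Fin d)) (w : EuclideanSpace ℝ (Fin d)) :
    ∑ a, inner ℝ ((opAvg F (sarahStep γ F a q).1 - opAvg F q.1)
      - ((sarahStep γ F a q).2 - q.2)) w = 0 := by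
  rw [← sum_inner]
  convert inner_zero_left w
  simp only [sarahStep, add_sub_cancel_right]
  calc ∑ a, (opAvg F (q.1 - γ • q.2) - opAvg F q.1 - (F a (q.1 - γ • q.2) - F a q.1))
      = ∑ a, (F a q.1 - opAvg F q.1)
          - ∑ a, (F a (q.1 - γ • q.2) - opAvg F (q.1 - γ • q.2)) := by
        rw [← sum_sub_distrib]
        exact sum_congr rfl fun a _ => by abel
    _ = 0 := by rw [sum_sub_opAvg, sum_sub_opAvg, sub_zero]

theorem sum_inner_sarahTraj_innovation {m : ℕ} (hm : m < K) :
    ∑ j : Fin K → Fin n,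
      inner ℝ ((opAvg F (sarahTraj γ F z0 j (m + 1)).1 - opAvg F (sarahTraj γ F z0 j m).1)
          - ((sarahTraj γ F z0 j (m + 1)).2 - (sarahTraj γ F z0 j m).2))
        (opAvg F (sarahTraj γ F z0 j (m + 1)).1 - (sarahTraj γ F z0 j m).2) = 0 := by
  set split := Equiv.funSplitAt (⟨m, hm⟩ : Fin K) (Fin n)
  rw [← split.symm.sum_comp, Fintype.sum_prod_type, sum_comm]
  refine sum_eq_zero fun g _ => ?_
  have hpast : ∀ a b,
      sarahTraj γ F z0 (split.symm (a, g)) m = sarahTraj γ F z0 (split.symm (b, g)) m :=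
    fun a b => sarahTraj_congr γ F z0 fun i hi => by
      have hne : i ≠ ⟨m, hm⟩ := fun h => by simp [h] at hi
      simp [split, Equiv.funSplitAt_symm_apply, hne]
  rcases isEmpty_or_nonempty (Fin n) with _ | ⟨⟨a₀⟩⟩
  · exact Fintype.sum_empty _
  set q := sarahTraj γ F z0 (split.symm (a₀, g)) m
  calc _ = ∑ a, inner ℝ
          ((opAvg F (sarahStep γ F a q).1 - opAvg F q.1) - ((sarahStep γ F a q).2 - q.2))
          (opAvg F (q.1 - γ • q.2) - q.2) :=
      sum_congr rfl fun a _ => by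
        rw [sarahTraj_succ γ F z0 _ hm, hpast a a₀,
          show split.symm (a, g) ⟨m, hm⟩ = a by simp [split]]
        rfl
    _ = 0 := sum_inner_sarahStep_innovation γ F q _

end Trajectory

theorem sarah_step_variance_identity_general {d n : ℕ}
    (F : Fin n → EuclideanSpace ℝ (Fin d) → EuclideanSpace ℝ (Fin d))
    (γ : ℝ)
    (K : ℕ) (z0 : EuclideanSpace ℝ (Fin d))
    (k : ℕ) (hk1 : 1 ≤ k) (hkK : k ≤ K) :
    (∑ j : Fin K → Fin n,
        ‖opAvg F (sarahTraj γ F z0 j k).1 - (sarahTraj γ F z0 j k).2‖ ^ 2) / (n : ℝ) ^ K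
      = (∑ j : Fin K → Fin n,
          ‖opAvg F (sarahTraj γ F z0 j (k - 1)).1 - (sarahTraj γ F z0 j (k - 1)).2‖ ^ 2)
            / (n : ℝ) ^ K
        - (∑ j : Fin K → Fin n,
            ‖opAvg F (sarahTraj γ F z0 j k).1 - opAvg F (sarahTraj γ F z0 j (k - 1)).1‖ ^ 2)
            / (n : ℝ) ^ K
        + (∑ j : Fin K → Fin n,
            ‖(sarahTraj γ F z0 j k).2 - (sarahTraj γ F z0 j (k - 1)).2‖ ^ 2)
            / (n : ℝ) ^ K := by
  obtain ⟨m, rfl⟩ : ∃ m, k = m + 1 := ⟨k - 1, by omega⟩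
  rw [Nat.add_sub_cancel, ← sub_div, ← add_div]
  congr 1
  calc _ = ∑ j : Fin K → Fin n,
        (‖opAvg F (sarahTraj γ F z0 j m).1 - (sarahTraj γ F z0 j m).2‖ ^ 2
          - ‖opAvg F (sarahTraj γ F z0 j (m + 1)).1 - opAvg F (sarahTraj γ F z0 j m).1‖ ^ 2
          + ‖(sarahTraj γ F z0 j (m + 1)).2 - (sarahTraj γ F z0 j m).2‖ ^ 2
          + 2 * inner ℝ
            ((opAvg F (sarahTraj γ F z0 j (m + 1)).1 - opAvg F (sarahTraj γ F z0 j m).1)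
              - ((sarahTraj γ F z0 j (m + 1)).2 - (sarahTraj γ F z0 j m).2))
            (opAvg F (sarahTraj γ F z0 j (m + 1)).1 - (sarahTraj γ F z0 j m).2)) :=
        sum_congr rfl fun j _ => norm_sub_sq_eq_of_increments _ _ _ _
    _ = _ := by
      rw [sum_add_distrib, ← mul_sum, sum_inner_sarahTraj_innovation γ F z0 hkK, mul_zero,
        add_zero, sum_add_distrib, sum_sub_distrib]

/-- **Exact per-step variance identity.** For arbitrary operators `F_i` with average
`F`, for every `k ∈ {1, …, K}` the SARAH inner loop satisfies the exact identity
`𝔼[‖F(z^k) - v^k‖²] = 𝔼[‖F(z^{k-1}) - v^{k-1}‖²] - 𝔼[‖F(z^k) - F(z^{k-1})‖²]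
  + 𝔼[‖v^k - v^{k-1}‖²]`,
where the expectation is the uniform average over all `n^K` index sequences. -/
theorem sarah_step_variance_identity {d n : ℕ} (hn : 1 ≤ n)
    (F : Fin n → EuclideanSpace ℝ (Fin d) → EuclideanSpace ℝ (Fin d))
    (γ : ℝ) (hγ0 : 0 < γ)
    (K : ℕ) (hK : 1 ≤ K) (z0 : EuclideanSpace ℝ (Fin d))
    (k : ℕ) (hk1 : 1 ≤ k) (hkK : k ≤ K) :
    (∑ j : Fin K → Fin n,
        ‖opAvg F (sarahTraj γ F z0 j k).1 - (sarahTraj γ F z0 j k).2‖ ^ 2) / (n : ℝ) ^ K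
      = (∑ j : Fin K → Fin n,
          ‖opAvg F (sarahTraj γ F z0 j (k - 1)).1 - (sarahTraj γ F z0 j (k - 1)).2‖ ^ 2)
            / (n : ℝ) ^ K
        - (∑ j : Fin K → Fin n,
            ‖opAvg F (sarahTraj γ F z0 j k).1 - opAvg F (sarahTraj γ F z0 j (k - 1)).1‖ ^ 2)
            / (n : ℝ) ^ K
        + (∑ j : Fin K → Fin n,
            ‖(sarahTraj γ F z0 j k).2 - (sarahTraj γ F z0 j (k - 1)).2‖ ^ 2)
            / (n : ℝ) ^ K :=
  sarah_step_variance_identity_general F γ K z0 k hk1 hkK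

end
end
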